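/- Let S be a finite singleton-rich semigroup and s, t ∈ S. Then st = s φ^{(s,t)} t and st = s ψ^{(s,t)} t, where φ^{(s,t)} and ψ^{(s,t)} are the eventual values of the sequences φ(s^φ_i, t^φ_i) and ψ(s^ψ_j, t^ψ_j) respectively. -/

import Mathlib

open scoped Classical

/-- φ*(s): the idempotent right identities of `s`. -/
def rIds {S : Type*} [Mul S] (s : S) : Set S := {e | e * e = e ∧ s * e = s}

/-- φ⁺(s): the idempotent left identities of `s`. -/
def lIds {S : Type*} [Mul S] (s : S) : Set S := {e | e * e = e ∧ e * s = s}

/-- `x` is the (necessarily unique) element of a singleton kernel (minimal ideal) of the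
subsemigroup `T`: `{x}` is an ideal of `T`, hence the minimal ideal of `T`. -/
def IsKer {S : Type*} [Semigroup S] (T : Subsemigroup S) (x : S) : Prop :=
  x ∈ T ∧ ∀ a ∈ T, a * x = x ∧ x * a = x

/-- The natural partial order on idempotents: `e ≤ f` iff `ef = fe = e`. -/
def nle {S : Type*} [Mul S] (e f : S) : Prop := e * f = e ∧ f * e = e

/-- The relation `≪`: `s ≪ t` iff `s = s⁺ t s*`, where `sa s = s*` and `pl s = s⁺`. -/
def ll {S : Type*} [Mul S] (sa pl : S → S) (s t : S) : Prop := s = pl s * t * sa s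

/-- φ(x,y) = (x* y)⁺. -/
def phiF {S : Type*} [Mul S] (sa pl : S → S) (x y : S) : S := pl (sa x * y)

/-- ψ(x,y) = (x y⁺)*. -/
def psiF {S : Type*} [Mul S] (sa pl : S → S) (x y : S) : S := sa (x * pl y)

/-- The φ-sequence: `(s^φ₀, t^φ₀) = (s, t)`,
`s^φ_{i+1} = s^φ_i φ(s^φ_i, t^φ_i)`, `t^φ_{i+1} = (s^φ_i)* t^φ_i`. -/
def phiSeq {S : Type*} [Mul S] (sa pl : S → S) (s t : S) : ℕ → S × S
  | 0 => (s, t)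
  | i + 1 =>
      let p := phiSeq sa pl s t i
      (p.1 * phiF sa pl p.1 p.2, sa p.1 * p.2)

/-- The ψ-sequence: `(s^ψ₀, t^ψ₀) = (s, t)`,
`s^ψ_{i+1} = s^ψ_i (t^ψ_i)⁺`, `t^ψ_{i+1} = ψ(s^ψ_i, t^ψ_i) t^ψ_i`. -/
def psiSeq {S : Type*} [Mul S] (sa pl : S → S) (s t : S) : ℕ → S × S
  | 0 => (s, t)
  | i + 1 =>
      let p := psiSeq sa pl s t i
      (p.1 * pl p.2, psiF sa pl p.1 p.2 * p.2)

/-- `e` is the stable (eventual) value `φ^{(s,t)}` of the sequence `φ(s^φ_i, t^φ_i)`. -/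
def IsPhiLim {S : Type*} [Mul S] (sa pl : S → S) (s t e : S) : Prop :=
  ∃ N : ℕ, ∀ i ≥ N, phiF sa pl (phiSeq sa pl s t i).1 (phiSeq sa pl s t i).2 = e

/-- `e` is the stable (eventual) value `ψ^{(s,t)}` of the sequence `ψ(s^ψ_i, t^ψ_i)`. -/
def IsPsiLim {S : Type*} [Mul S] (sa pl : S → S) (s t e : S) : Prop :=
  ∃ N : ℕ, ∀ i ≥ N, psiF sa pl (psiSeq sa pl s t i).1 (psiSeq sa pl s t i).2 = e


/-!
Write `A i, B i` for the φ-sequence and `F i = φ(A i, B i)`. Since `(A i)*` is a right identity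
of `A i` and `F i` a left identity of `(A i)* B i`, the product `A i B i = st` never changes.
Minimality of `x*` and `y⁺` in the natural order makes `F i` decreasing, and also
`F i ≤ (A i)*`; so its eventual value `L` satisfies `F i L = L = L (A i)*`, which makes
`A i L B i = s L t` constant as well. Finally `L = F N` is a right identity of `A (N+1)`, whence
`st = A (N+1) B (N+1) = A (N+1) L B (N+1) = s L t`. The ψ-statement is the φ-statement in the
opposite semigroup.
-/

section

open MulOpposite

variable {S : Type*} [Semigroup S] {sa pl : S → S}

def IsLeastRightId (sa : S → S) : Prop :=
  ∀ s, sa s ∈ rIds s ∧ ∀ e ∈ rIds s, nle (sa s) e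

def IsLeastLeftId (pl : S → S) : Prop :=
  ∀ s, pl s ∈ lIds s ∧ ∀ e ∈ lIds s, nle (pl s) e

lemma nle_trans {e f g : S} (hef : nle e f) (hfg : nle f g) : nle e g := by
  refine ⟨?_, ?_⟩
  · rw [← hef.1, mul_assoc, hfg.1]
  · rw [← hef.2, ← mul_assoc, hfg.2]

lemma mul_eq_self_of_mem_closure_rIds {s a : S} (ha : a ∈ Subsemigroup.closure (rIds s)) :
    s * a = s := by
  induction ha using Subsemigroup.closure_induction with
  | mem x hx => exact hx.2
  | mul x y _ _ hx hy => rw [← mul_assoc, hx, hy]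

lemma mul_eq_self_of_mem_closure_lIds {s a : S} (ha : a ∈ Subsemigroup.closure (lIds s)) :
    a * s = s := by
  induction ha using Subsemigroup.closure_induction with
  | mem x hx => exact hx.2
  | mul x y _ _ hx hy => rw [mul_assoc, hy, hx]

lemma isLeastRightId_of_isKer
    (hsa : ∀ s, IsKer (Subsemigroup.closure (rIds s)) (sa s)) : IsLeastRightId sa := fun s =>
  ⟨⟨((hsa s).2 _ (hsa s).1).1, mul_eq_self_of_mem_closure_rIds (hsa s).1⟩,
    fun e he => ((hsa s).2 e (Subsemigroup.subset_closure he)).symm⟩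

lemma isLeastLeftId_of_isKer
    (hpl : ∀ s, IsKer (Subsemigroup.closure (lIds s)) (pl s)) : IsLeastLeftId pl := fun s =>
  ⟨⟨((hpl s).2 _ (hpl s).1).1, mul_eq_self_of_mem_closure_lIds (hpl s).1⟩,
    fun e he => ((hpl s).2 e (Subsemigroup.subset_closure he)).symm⟩

lemma nle_op {e f : S} : nle (op e) (op f) ↔ nle e f := by
  simp only [nle, ← op_mul, op_inj, and_comm]

lemma op_mem_rIds {e s : S} : op e ∈ rIds (op s) ↔ e ∈ lIds s := by
  simp only [rIds, lIds, Set.mem_ofPred_eq, ← op_mul, op_inj]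

lemma op_mem_lIds {e s : S} : op e ∈ lIds (op s) ↔ e ∈ rIds s := by
  simp only [rIds, lIds, Set.mem_ofPred_eq, ← op_mul, op_inj]

lemma IsLeastLeftId.op (hpl : IsLeastLeftId pl) :
    IsLeastRightId fun x : Sᵐᵒᵖ => op (pl x.unop) := fun x =>
  ⟨op_mem_rIds.2 (hpl x.unop).1, fun e he =>
    nle_op.2 ((hpl x.unop).2 e.unop (op_mem_rIds.1 he))⟩

lemma IsLeastRightId.op (hsa : IsLeastRightId sa) :
    IsLeastLeftId fun x : Sᵐᵒᵖ => op (sa x.unop) := fun x =>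
  ⟨op_mem_lIds.2 (hsa x.unop).1, fun e he =>
    nle_op.2 ((hsa x.unop).2 e.unop (op_mem_lIds.1 he))⟩

lemma nle_of_forall_succ_nle {F : ℕ → S} (hidem : ∀ i, F i * F i = F i)
    (hstep : ∀ i, nle (F (i + 1)) (F i)) {i j : ℕ} (hij : i ≤ j) : nle (F j) (F i) := by
  induction j, hij using Nat.le_induction with
  | base => exact ⟨hidem i, hidem i⟩
  | succ j _ ih => exact nle_trans (hstep j) ih

lemma phiF_mem_lIds (hpl : IsLeastLeftId pl) (x y : S) : phiF sa pl x y ∈ lIds (sa x * y) :=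
  (hpl _).1

lemma phiF_nle_sa (hsa : IsLeastRightId sa) (hpl : IsLeastLeftId pl) (x y : S) :
    nle (phiF sa pl x y) (sa x) :=
  (hpl _).2 _ ⟨(hsa x).1.1, by rw [← mul_assoc, (hsa x).1.1]⟩

lemma mul_phiF_mul_sa_mul (hsa : IsLeastRightId sa) (hpl : IsLeastLeftId pl) (a b : S) :
    a * phiF sa pl a b * (sa a * b) = a * b := by
  rw [mul_assoc a, (phiF_mem_lIds hpl a b).2, ← mul_assoc, (hsa a).1.2]

lemma phiSeq_fst_mul_snd (hsa : IsLeastRightId sa) (hpl : IsLeastLeftId pl) (s t : S) (i : ℕ) :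
    (phiSeq sa pl s t i).1 * (phiSeq sa pl s t i).2 = s * t := by
  induction i with
  | zero => rfl
  | succ i ih => exact (mul_phiF_mul_sa_mul hsa hpl _ _).trans ih

lemma phiF_mem_rIds_phiSeq_succ (hpl : IsLeastLeftId pl) (s t : S) (i : ℕ) :
    phiF sa pl (phiSeq sa pl s t i).1 (phiSeq sa pl s t i).2 ∈
      rIds (phiSeq sa pl s t (i + 1)).1 :=
  have hF := phiF_mem_lIds hpl (phiSeq sa pl s t i).1 (phiSeq sa pl s t i).2
  ⟨hF.1, by simp only [phiSeq]; rw [mul_assoc, hF.1]⟩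

lemma phiF_phiSeq_succ_nle (hsa : IsLeastRightId sa) (hpl : IsLeastLeftId pl) (s t : S)
    (i : ℕ) : nle (phiF sa pl (phiSeq sa pl s t (i + 1)).1 (phiSeq sa pl s t (i + 1)).2)
      (phiF sa pl (phiSeq sa pl s t i).1 (phiSeq sa pl s t i).2) := by
  set F := phiF sa pl (phiSeq sa pl s t i).1 (phiSeq sa pl s t i).2
  set a := (phiSeq sa pl s t (i + 1)).1
  have hF : F ∈ rIds a := phiF_mem_rIds_phiSeq_succ hpl s t i
  have hsaF : F * sa a = sa a := ((hsa a).2 F hF).2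
  exact (hpl _).2 F ⟨hF.1, by rw [← mul_assoc, hsaF]⟩

lemma IsPhiLim.nle_phiF (hsa : IsLeastRightId sa) (hpl : IsLeastLeftId pl) {s t L : S}
    (hL : IsPhiLim sa pl s t L) (i : ℕ) :
    nle L (phiF sa pl (phiSeq sa pl s t i).1 (phiSeq sa pl s t i).2) := by
  obtain ⟨N, hN⟩ := hL
  rw [← hN (max i N) (le_max_right _ _)]
  exact nle_of_forall_succ_nle
    (F := fun i => phiF sa pl (phiSeq sa pl s t i).1 (phiSeq sa pl s t i).2)
    (fun _ => (phiF_mem_lIds hpl _ _).1) (phiF_phiSeq_succ_nle hsa hpl s t) (le_max_left _ _)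

lemma mul_phiF_mul_mul_sa_mul (hsa : IsLeastRightId sa) (hpl : IsLeastLeftId pl) {a b L : S}
    (hL : nle L (phiF sa pl a b)) : a * phiF sa pl a b * L * (sa a * b) = a * L * b := by
  have hLsa : L * sa a = L := (nle_trans hL (phiF_nle_sa hsa hpl a b)).1
  rw [mul_assoc a, hL.2, ← mul_assoc, mul_assoc a, hLsa]

lemma phiSeq_fst_mul_mul_snd (hsa : IsLeastRightId sa) (hpl : IsLeastLeftId pl) {s t L : S}
    (hL : ∀ i, nle L (phiF sa pl (phiSeq sa pl s t i).1 (phiSeq sa pl s t i).2)) (i : ℕ) :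
    (phiSeq sa pl s t i).1 * L * (phiSeq sa pl s t i).2 = s * L * t := by
  induction i with
  | zero => rfl
  | succ i ih => exact (mul_phiF_mul_mul_sa_mul hsa hpl (hL i)).trans ih

theorem IsPhiLim.mul_eq (hsa : IsLeastRightId sa) (hpl : IsLeastLeftId pl) {s t L : S}
    (hL : IsPhiLim sa pl s t L) : s * t = s * L * t := by
  obtain ⟨N, hN⟩ := hL
  have hright : (phiSeq sa pl s t (N + 1)).1 * L = (phiSeq sa pl s t (N + 1)).1 := by
    rw [← hN N le_rfl]; exact (phiF_mem_rIds_phiSeq_succ hpl s t N).2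
  rw [← phiSeq_fst_mul_snd hsa hpl s t (N + 1), ← hright,
    phiSeq_fst_mul_mul_snd hsa hpl (IsPhiLim.nle_phiF hsa hpl ⟨N, hN⟩) (N + 1)]

lemma phiSeq_op (s t : S) (i : ℕ) :
    phiSeq (fun x : Sᵐᵒᵖ => op (pl x.unop)) (fun x => op (sa x.unop)) (op t) (op s) i =
      (op (psiSeq sa pl s t i).2, op (psiSeq sa pl s t i).1) := by
  induction i with
  | zero => rfl
  | succ i ih => simp only [phiSeq, psiSeq, ih]; rfl

lemma IsPsiLim.op {s t L : S} (hL : IsPsiLim sa pl s t L) :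
    IsPhiLim (fun x : Sᵐᵒᵖ => op (pl x.unop)) (fun x => op (sa x.unop)) (op t) (op s)
      (op L) := by
  obtain ⟨N, hN⟩ := hL
  exact ⟨N, fun i hi => by rw [phiSeq_op, ← hN i hi]; rfl⟩

theorem IsPsiLim.mul_eq (hsa : IsLeastRightId sa) (hpl : IsLeastLeftId pl) {s t L : S}
    (hL : IsPsiLim sa pl s t L) : s * t = s * L * t := by
  have h := congrArg unop (hL.op.mul_eq hpl.op hsa.op)
  simpa only [unop_mul, unop_op, mul_assoc] using h

end

theorem stmt13_general {S : Type*} [Semigroup S] (sa pl : S → S)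
    (hsa : ∀ s : S, IsKer (Subsemigroup.closure (rIds s)) (sa s))
    (hpl : ∀ s : S, IsKer (Subsemigroup.closure (lIds s)) (pl s))
    (s t phiL psiL : S)
    (hphi : IsPhiLim sa pl s t phiL) (hpsi : IsPsiLim sa pl s t psiL) :
    s * t = s * phiL * t ∧ s * t = s * psiL * t :=
  ⟨hphi.mul_eq (isLeastRightId_of_isKer hsa) (isLeastLeftId_of_isKer hpl),
    hpsi.mul_eq (isLeastRightId_of_isKer hsa) (isLeastLeftId_of_isKer hpl)⟩

/-- `st = s φ^{(s,t)} t = s ψ^{(s,t)} t`. -/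
theorem stmt13 {S : Type*} [Semigroup S] [Fintype S] (sa pl : S → S)
    (hsa : ∀ s : S, IsKer (Subsemigroup.closure (rIds s)) (sa s))
    (hpl : ∀ s : S, IsKer (Subsemigroup.closure (lIds s)) (pl s))
    (s t phiL psiL : S)
    (hphi : IsPhiLim sa pl s t phiL) (hpsi : IsPsiLim sa pl s t psiL) :
    s * t = s * phiL * t ∧ s * t = s * psiL * t :=
  stmt13_general sa pl hsa hpl s t phiL psiL hphi hpsi
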